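/- Let a1, a2, a3 be nonzero real numbers with A = a1*a2 + a1*a3 + a2*a3 ≠ 0, and let x1, x2, x3 be positive reals. Let J be the 3×3 Jacobian matrix of the map (x1,x2,x3) ↦ (f(x1,x2,x3), g(x1,x2,x3), h(x1,x2,x3)) at the point (x1,x2,x3). Then det J = 0, trace J = 2*F1(x1,x2,x3)/(A*x1*x2*x3), and ((trace J)^2 - trace(J^2))/2 = F2(x1,x2,x3)/(A^2*x1^2*x2^2*x3^2); equivalently, the characteristic polynomial of J is t^3 - (2*F1/(A*x1*x2*x3))*t^2 + (F2/(A^2*x1^2*x2^2*x3^2))*t. -/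

import Mathlib

noncomputable section
open Real Set

/-- `A = a1*a2 + a1*a3 + a2*a3`. -/
def AA (a1 a2 a3 : ℝ) : ℝ := a1*a2 + a1*a3 + a2*a3

/-- The auxiliary function `B`. -/
def Bfun (a1 a2 a3 x1 x2 x3 : ℝ) : ℝ :=
  (1/(a1*x1) + 1/(a2*x2) + 1/(a3*x3) - (x1/(x2*x3) + x2/(x1*x3) + x3/(x1*x2))) *
    (1/a1 + 1/a2 + 1/a3)⁻¹

/-- First component of the normalized Ricci flow vector field. -/
def fRF (a1 a2 a3 x1 x2 x3 : ℝ) : ℝ :=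
  -1 - a1*x1*(x1/(x2*x3) - x2/(x1*x3) - x3/(x1*x2)) + x1 * Bfun a1 a2 a3 x1 x2 x3

/-- Second component of the normalized Ricci flow vector field. -/
def gRF (a1 a2 a3 x1 x2 x3 : ℝ) : ℝ :=
  -1 - a2*x2*(x2/(x1*x3) - x3/(x1*x2) - x1/(x2*x3)) + x2 * Bfun a1 a2 a3 x1 x2 x3

/-- Third component of the normalized Ricci flow vector field. -/
def hRF (a1 a2 a3 x1 x2 x3 : ℝ) : ℝ :=
  -1 - a3*x3*(x3/(x1*x2) - x1/(x2*x3) - x2/(x1*x3)) + x3 * Bfun a1 a2 a3 x1 x2 x3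

/-- The quantity `F1` (trace numerator). -/
def F1 (a1 a2 a3 x1 x2 x3 : ℝ) : ℝ :=
  a1*a2*x1*x2 + a1*a3*x1*x3 + a2*a3*x2*x3
    - (AA a1 a2 a3 + a2*a3)*a1*x1^2 - (AA a1 a2 a3 + a1*a3)*a2*x2^2
    - (AA a1 a2 a3 + a1*a2)*a3*x3^2

/-- The quantity `F2` (determinant numerator). -/
def F2 (a1 a2 a3 x1 x2 x3 : ℝ) : ℝ :=
  let A := a1*a2 + a1*a3 + a2*a3
  (a1^2*a2*a3*(2*A + a2*a3) - A^3)*x1^4 + (a1*a2^2*a3*(2*A + a1*a3) - A^3)*x2^4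
  + (a1*a2*a3^2*(2*A + a1*a2) - A^3)*x3^4
  - 2*a1^2*(A + a2*a3)*(a2*x2 + a3*x3)*x1^3
  - 2*a2^2*(A + a1*a3)*(a1*x1 + a3*x3)*x2^3
  - 2*a3^2*(A + a1*a2)*(a2*x2 + a1*x1)*x3^3
  + (a1*a2*(2*(3*a1*a2 + a2^2 + a1^2)*a3^2 + 2*(a1 + a2)*a1*a2*a3 + a1*a2) + 2*A^3)*x1^2*x2^2
  + (a1*a3*(2*(3*a1*a3 + a3^2 + a1^2)*a2^2 + 2*(a1 + a3)*a1*a2*a3 + a1*a3) + 2*A^3)*x1^2*x3^2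
  + (a2*a3*(2*(3*a2*a3 + a3^2 + a2^2)*a1^2 + 2*(a2 + a3)*a1*a2*a3 + a2*a3) + 2*A^3)*x2^2*x3^2
  - 2*a1*a2*a3*((A + a2*a3 - a1)*x1 + (A + a1*a3 - a2)*x2 + (A + a1*a2 - a3)*x3)*x1*x2*x3

/-- The 3×3 Jacobian matrix of `(f, g, h)` at `(x1, x2, x3)`,
with entries given by partial derivatives. -/
def Jmat3 (a1 a2 a3 x1 x2 x3 : ℝ) : Matrix (Fin 3) (Fin 3) ℝ :=
  !![deriv (fun s => fRF a1 a2 a3 s x2 x3) x1, deriv (fun s => fRF a1 a2 a3 x1 s x3) x2,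
       deriv (fun s => fRF a1 a2 a3 x1 x2 s) x3;
     deriv (fun s => gRF a1 a2 a3 s x2 x3) x1, deriv (fun s => gRF a1 a2 a3 x1 s x3) x2,
       deriv (fun s => gRF a1 a2 a3 x1 x2 s) x3;
     deriv (fun s => hRF a1 a2 a3 s x2 x3) x1, deriv (fun s => hRF a1 a2 a3 x1 s x3) x2,
       deriv (fun s => hRF a1 a2 a3 x1 x2 s) x3]

/-!
The vector field `(f, g, h)` is homogeneous of degree `0` in `(x1, x2, x3)`, so by Euler's relation
its Jacobian kills the position vector and the determinant vanishes. The functions `g` and `h` are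
`f` with its indices permuted, and in each single variable `f` has the shape
`p2 * s ^ 2 + p1 * s + p0 + q / s`; hence the whole Jacobian is assembled from two explicit partial
derivatives of `f`. The trace and the sum of the principal `2 × 2` minors (which is
`(tr J ^ 2 - tr (J * J)) / 2` and the linear coefficient of the characteristic polynomial) are then
rational identities, once `(1/a1 + 1/a2 + 1/a3)⁻¹` is rewritten as `a1 * a2 * a3 / A`.
-/

namespace Matrix

variable {R : Type*} [CommRing R]

def principalMinorSum (M : Matrix (Fin 3) (Fin 3) R) : R :=
  M 0 0 * M 1 1 - M 0 1 * M 1 0 + M 0 0 * M 2 2 - M 0 2 * M 2 0 + M 1 1 * M 2 2 - M 1 2 * M 2 1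

open Polynomial in
theorem charpoly_fin_three (M : Matrix (Fin 3) (Fin 3) R) :
    M.charpoly = X ^ 3 - C M.trace * X ^ 2 + C M.principalMinorSum * X - C M.det := by
  rw [charpoly, det_fin_three, det_fin_three, trace_fin_three, principalMinorSum]
  simp only [charmatrix_apply_eq, charmatrix_apply_ne _ _ _ (by decide : (0 : Fin 3) ≠ 1),
    charmatrix_apply_ne _ _ _ (by decide : (0 : Fin 3) ≠ 2),
    charmatrix_apply_ne _ _ _ (by decide : (1 : Fin 3) ≠ 0),
    charmatrix_apply_ne _ _ _ (by decide : (1 : Fin 3) ≠ 2),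
    charmatrix_apply_ne _ _ _ (by decide : (2 : Fin 3) ≠ 0),
    charmatrix_apply_ne _ _ _ (by decide : (2 : Fin 3) ≠ 1), map_add, map_sub, map_mul]
  ring

theorem trace_sq_sub_trace_mul_self_fin_three (M : Matrix (Fin 3) (Fin 3) R) :
    M.trace ^ 2 - (M * M).trace = 2 * M.principalMinorSum := by
  simp only [trace_fin_three, mul_apply, Fin.sum_univ_three, principalMinorSum]
  ring

end Matrix

theorem hasDerivAt_quadratic_add_div (p2 p1 p0 q : ℝ) {x : ℝ} (hx : x ≠ 0) :
    HasDerivAt (fun s => p2 * s ^ 2 + p1 * s + p0 + q / s) (2 * p2 * x + p1 - q / x ^ 2) x := by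
  have h : HasDerivAt (fun s => p2 * s ^ 2 + p1 * s + p0 + q / s)
      (p2 * (2 * x) + p1 * 1 + q * -(x ^ 2)⁻¹) x := by
    have hsq : HasDerivAt (fun s : ℝ => s ^ 2) (2 * x) x := by simpa using hasDerivAt_pow 2 x
    exact (((hsq.const_mul p2).add ((hasDerivAt_id x).const_mul p1)).add_const
      p0).add ((hasDerivAt_inv hx).const_mul q)
  exact h.congr_deriv (by ring)

section PartialDerivatives

variable {a1 a2 a3 x1 x2 x3 : ℝ}

def fRFDerivFst (K a1 a2 a3 x1 x2 x3 : ℝ) : ℝ :=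
  -2 * (a1 + K) * x1 / (x2 * x3) + K * (1 / (a2 * x2) + 1 / (a3 * x3))

def fRFDerivSnd (K a1 a2 x1 x2 x3 : ℝ) : ℝ :=
  (a1 - K) / x3 - ((a1 - K) * x3 - (a1 + K) * x1 ^ 2 / x3 + K * x1 / a2) / x2 ^ 2

theorem hasDerivAt_fRF_fst (hx1 : x1 ≠ 0) :
    HasDerivAt (fun s => fRF a1 a2 a3 s x2 x3)
      (fRFDerivFst (1 / a1 + 1 / a2 + 1 / a3)⁻¹ a1 a2 a3 x1 x2 x3) x1 := by
  unfold fRF Bfun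
  generalize (1 / a1 + 1 / a2 + 1 / a3)⁻¹ = K
  refine ((hasDerivAt_quadratic_add_div (-(a1 + K) / (x2 * x3))
    (K * (1 / (a2 * x2) + 1 / (a3 * x3))) (-1 + (a1 - K) * (x2 / x3 + x3 / x2) + K / a1) 0
    hx1).congr_of_eventuallyEq ?_).congr_deriv ?_
  · filter_upwards [eventually_ne_nhds hx1] with s hs
    field_simp
    ring
  · unfold fRFDerivFst
    field_simp
    ring

theorem hasDerivAt_fRF_snd (hx1 : x1 ≠ 0) (hx2 : x2 ≠ 0) (hx3 : x3 ≠ 0) :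
    HasDerivAt (fun s => fRF a1 a2 a3 x1 s x3)
      (fRFDerivSnd (1 / a1 + 1 / a2 + 1 / a3)⁻¹ a1 a2 x1 x2 x3) x2 := by
  unfold fRF Bfun
  generalize (1 / a1 + 1 / a2 + 1 / a3)⁻¹ = K
  refine ((hasDerivAt_quadratic_add_div 0 ((a1 - K) / x3) (-1 + K / a1 + K * x1 / (a3 * x3))
    ((a1 - K) * x3 - (a1 + K) * x1 ^ 2 / x3 + K * x1 / a2) hx2).congr_of_eventuallyEq
    ?_).congr_deriv ?_
  · filter_upwards [eventually_ne_nhds hx2] with s hs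
    field_simp
    ring
  · unfold fRFDerivSnd
    ring

theorem fRF_swap23 : fRF a1 a2 a3 x1 x2 x3 = fRF a1 a3 a2 x1 x3 x2 := by
  unfold fRF Bfun
  ring

theorem gRF_eq_fRF : gRF a1 a2 a3 x1 x2 x3 = fRF a2 a3 a1 x2 x3 x1 := by
  unfold gRF fRF Bfun
  ring

theorem hRF_eq_fRF : hRF a1 a2 a3 x1 x2 x3 = fRF a3 a1 a2 x3 x1 x2 := by
  unfold hRF fRF Bfun
  ring

theorem hasDerivAt_fRF_thd (hx1 : x1 ≠ 0) (hx2 : x2 ≠ 0) (hx3 : x3 ≠ 0) :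
    HasDerivAt (fun s => fRF a1 a2 a3 x1 x2 s)
      (fRFDerivSnd (1 / a1 + 1 / a2 + 1 / a3)⁻¹ a1 a3 x1 x3 x2) x3 := by
  convert hasDerivAt_fRF_snd (a1 := a1) (a2 := a3) (a3 := a2) hx1 hx3 hx2 using 1
  · exact funext fun s => fRF_swap23
  · rw [add_right_comm]

end PartialDerivatives

def jacobianForm (K a1 a2 a3 x1 x2 x3 : ℝ) : Matrix (Fin 3) (Fin 3) ℝ :=
  !![fRFDerivFst K a1 a2 a3 x1 x2 x3, fRFDerivSnd K a1 a2 x1 x2 x3, fRFDerivSnd K a1 a3 x1 x3 x2;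
     fRFDerivSnd K a2 a1 x2 x1 x3, fRFDerivFst K a2 a3 a1 x2 x3 x1, fRFDerivSnd K a2 a3 x2 x3 x1;
     fRFDerivSnd K a3 a1 x3 x1 x2, fRFDerivSnd K a3 a2 x3 x2 x1, fRFDerivFst K a3 a1 a2 x3 x1 x2]

theorem Jmat3_eq_jacobianForm {a1 a2 a3 x1 x2 x3 : ℝ} (hx1 : x1 ≠ 0) (hx2 : x2 ≠ 0)
    (hx3 : x3 ≠ 0) :
    Jmat3 a1 a2 a3 x1 x2 x3 = jacobianForm (1 / a1 + 1 / a2 + 1 / a3)⁻¹ a1 a2 a3 x1 x2 x3 := by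
  have hK231 : 1 / a2 + 1 / a3 + 1 / a1 = 1 / a1 + 1 / a2 + 1 / a3 := by ring
  have hK312 : 1 / a3 + 1 / a1 + 1 / a2 = 1 / a1 + 1 / a2 + 1 / a3 := by ring
  simp only [Jmat3, gRF_eq_fRF, hRF_eq_fRF, (hasDerivAt_fRF_fst hx1).deriv,
    (hasDerivAt_fRF_fst hx2).deriv, (hasDerivAt_fRF_fst hx3).deriv,
    (hasDerivAt_fRF_snd hx1 hx2 hx3).deriv, (hasDerivAt_fRF_snd hx2 hx3 hx1).deriv,
    (hasDerivAt_fRF_snd hx3 hx1 hx2).deriv, (hasDerivAt_fRF_thd hx1 hx2 hx3).deriv,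
    (hasDerivAt_fRF_thd hx2 hx3 hx1).deriv, (hasDerivAt_fRF_thd hx3 hx1 hx2).deriv, hK231, hK312]
  rfl

section JacobianForm

variable {K a1 a2 a3 x1 x2 x3 : ℝ}

theorem fRFDeriv_euler (hx2 : x2 ≠ 0) (hx3 : x3 ≠ 0) :
    x1 * fRFDerivFst K a1 a2 a3 x1 x2 x3 + x2 * fRFDerivSnd K a1 a2 x1 x2 x3
      + x3 * fRFDerivSnd K a1 a3 x1 x3 x2 = 0 := by
  unfold fRFDerivFst fRFDerivSnd
  field_simp
  ring

theorem det_jacobianForm (hx1 : x1 ≠ 0) (hx2 : x2 ≠ 0) (hx3 : x3 ≠ 0) :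
    (jacobianForm K a1 a2 a3 x1 x2 x3).det = 0 := by
  refine Matrix.exists_mulVec_eq_zero_iff.mp ⟨![x1, x2, x3], fun h => hx1 (congrFun h 0), ?_⟩
  ext i
  fin_cases i <;>
    simp only [Matrix.mulVec, dotProduct, jacobianForm, Fin.zero_eta, Fin.mk_one, Fin.reduceFinMk,
      Matrix.of_apply, Matrix.cons_val', Matrix.cons_val_fin_one, Matrix.cons_val_zero,
      Matrix.cons_val_one, Matrix.cons_val, Fin.sum_univ_three, Pi.zero_apply]
  · linear_combination fRFDeriv_euler (K := K) (a1 := a1) (a2 := a2) (a3 := a3) (x1 := x1) hx2 hx3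
  · linear_combination fRFDeriv_euler (K := K) (a1 := a2) (a2 := a3) (a3 := a1) (x1 := x2) hx3 hx1
  · linear_combination fRFDeriv_euler (K := K) (a1 := a3) (a2 := a1) (a3 := a2) (x1 := x3) hx1 hx2

theorem trace_jacobianForm (ha1 : a1 ≠ 0) (ha2 : a2 ≠ 0) (ha3 : a3 ≠ 0)
    (hA : AA a1 a2 a3 ≠ 0) (hx1 : x1 ≠ 0) (hx2 : x2 ≠ 0) (hx3 : x3 ≠ 0) :
    (jacobianForm (a1 * a2 * a3 / AA a1 a2 a3) a1 a2 a3 x1 x2 x3).trace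
      = 2 * F1 a1 a2 a3 x1 x2 x3 / (AA a1 a2 a3 * x1 * x2 * x3) := by
  simp only [jacobianForm, Matrix.trace_fin_three, Matrix.of_apply, Matrix.cons_val',
    Matrix.cons_val_zero, Matrix.cons_val_fin_one, Matrix.cons_val_one, Matrix.cons_val]
  unfold fRFDerivFst F1
  field_simp
  ring

theorem principalMinorSum_jacobianForm (ha1 : a1 ≠ 0) (ha2 : a2 ≠ 0) (ha3 : a3 ≠ 0)
    (hA : AA a1 a2 a3 ≠ 0) (hx1 : x1 ≠ 0) (hx2 : x2 ≠ 0) (hx3 : x3 ≠ 0) :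
    (jacobianForm (a1 * a2 * a3 / AA a1 a2 a3) a1 a2 a3 x1 x2 x3).principalMinorSum
      = F2 a1 a2 a3 x1 x2 x3 / (AA a1 a2 a3 ^ 2 * x1 ^ 2 * x2 ^ 2 * x3 ^ 2) := by
  simp only [Matrix.principalMinorSum, jacobianForm, Matrix.of_apply, Matrix.cons_val',
    Matrix.cons_val_zero, Matrix.cons_val_fin_one, Matrix.cons_val_one, Matrix.cons_val]
  unfold fRFDerivFst fRFDerivSnd
  field_simp
  unfold F2 AA
  ring

end JacobianForm

theorem inv_sum_one_div_eq (a1 a2 a3 : ℝ) (ha1 : a1 ≠ 0) (ha2 : a2 ≠ 0) (ha3 : a3 ≠ 0) :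
    (1 / a1 + 1 / a2 + 1 / a3)⁻¹ = a1 * a2 * a3 / AA a1 a2 a3 := by
  rw [show 1 / a1 + 1 / a2 + 1 / a3 = AA a1 a2 a3 / (a1 * a2 * a3) by unfold AA; field_simp; ring,
    inv_div]

theorem jacobian3_invariants (a1 a2 a3 x1 x2 x3 : ℝ)
    (ha1 : a1 ≠ 0) (ha2 : a2 ≠ 0) (ha3 : a3 ≠ 0) (hA : AA a1 a2 a3 ≠ 0)
    (hx1 : 0 < x1) (hx2 : 0 < x2) (hx3 : 0 < x3) :
    (Jmat3 a1 a2 a3 x1 x2 x3).det = 0 ∧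
    (Jmat3 a1 a2 a3 x1 x2 x3).trace
      = 2 * F1 a1 a2 a3 x1 x2 x3 / (AA a1 a2 a3 * x1 * x2 * x3) ∧
    (((Jmat3 a1 a2 a3 x1 x2 x3).trace^2
        - (Jmat3 a1 a2 a3 x1 x2 x3 * Jmat3 a1 a2 a3 x1 x2 x3).trace) / 2
      = F2 a1 a2 a3 x1 x2 x3 / ((AA a1 a2 a3)^2 * x1^2 * x2^2 * x3^2)) ∧
    (Jmat3 a1 a2 a3 x1 x2 x3).charpoly
      = Polynomial.X^3
        - Polynomial.C (2 * F1 a1 a2 a3 x1 x2 x3 / (AA a1 a2 a3 * x1 * x2 * x3)) * Polynomial.X^2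
        + Polynomial.C (F2 a1 a2 a3 x1 x2 x3 / ((AA a1 a2 a3)^2 * x1^2 * x2^2 * x3^2)) * Polynomial.X := by
  have hJ : Jmat3 a1 a2 a3 x1 x2 x3
      = jacobianForm (a1 * a2 * a3 / AA a1 a2 a3) a1 a2 a3 x1 x2 x3 := by
    rw [Jmat3_eq_jacobianForm hx1.ne' hx2.ne' hx3.ne', inv_sum_one_div_eq a1 a2 a3 ha1 ha2 ha3]
  have hdet : (Jmat3 a1 a2 a3 x1 x2 x3).det = 0 := by
    rw [hJ]
    exact det_jacobianForm hx1.ne' hx2.ne' hx3.ne'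
  have htr : (Jmat3 a1 a2 a3 x1 x2 x3).trace
      = 2 * F1 a1 a2 a3 x1 x2 x3 / (AA a1 a2 a3 * x1 * x2 * x3) := by
    rw [hJ]
    exact trace_jacobianForm ha1 ha2 ha3 hA hx1.ne' hx2.ne' hx3.ne'
  have hminors : (Jmat3 a1 a2 a3 x1 x2 x3).principalMinorSum
      = F2 a1 a2 a3 x1 x2 x3 / (AA a1 a2 a3 ^ 2 * x1 ^ 2 * x2 ^ 2 * x3 ^ 2) := by
    rw [hJ]
    exact principalMinorSum_jacobianForm ha1 ha2 ha3 hA hx1.ne' hx2.ne' hx3.ne'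
  refine ⟨hdet, htr, ?_, ?_⟩
  · rw [Matrix.trace_sq_sub_trace_mul_self_fin_three, hminors]
    ring
  · rw [Matrix.charpoly_fin_three, hdet, htr, hminors, Polynomial.C_0, sub_zero]
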